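/- Let p > 2, q = p/(p-1), δ > 0, and Q the Nazarov–Treil function. In the good region Ω_g = {(ζ,η) : |ζ|^p > |η|^q > 0}, the mixed Hessian blocks vanish: ∂²_{ζᵢηⱼ} Q = 0 for all i, j ∈ {1,2}, and moreover H₁(Q)(ζ,η) + tan φ · I₁(Q)(ζ,η) = (p+2δ)|ζ|^{p-2} D_{p,φ}(ζ) and H₃(Q)(ζ,η) - tan φ · I₃(Q)(ζ,η) = (q + (2-q)δ)|η|^{q-2} D_{q,-φ}(η) for any φ ∈ (-π/2, π/2). -/

import Mathlib

noncomputable section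
open Real Matrix

def Kmat (α : ℝ) : Matrix (Fin 2) (Fin 2) ℝ :=
  !![Real.cos α, Real.sin α; Real.sin α, -Real.cos α]

def Omat (φ : ℝ) : Matrix (Fin 2) (Fin 2) ℝ :=
  !![Real.cos φ, -Real.sin φ; Real.sin φ, Real.cos φ]

/-- The matrix `D_{r,φ}(v)` of Bakry, for `v ∈ ℝ² ≅ ℂ`. -/
def DmatC (r φ : ℝ) (v : ℂ) : Matrix (Fin 2) (Fin 2) ℝ :=
  (r / 2) • ((1 : Matrix (Fin 2) (Fin 2) ℝ) +
    ((1 - 2 / r) / Real.cos φ) • Kmat (2 * Complex.arg v - φ))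

def qexp (p : ℝ) : ℝ := p / (p - 1)

/-- The Nazarov–Treil Bellman function on `ℂ × ℂ ≅ ℝ² × ℝ²`. -/
def Q (p δ : ℝ) (ζ η : ℂ) : ℝ :=
  if ‖ζ‖ ^ p ≤ ‖η‖ ^ qexp p then
    ‖ζ‖ ^ p + ‖η‖ ^ qexp p +
      δ * (‖ζ‖ ^ (2 : ℝ) * ‖η‖ ^ (2 - qexp p))
  else
    ‖ζ‖ ^ p + ‖η‖ ^ qexp p +
      δ * ((2 / p) * ‖ζ‖ ^ p + (2 / qexp p - 1) * ‖η‖ ^ qexp p)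

/-- Coordinate directions in `ℂ ≅ ℝ²`. -/
def dir : Fin 2 → ℂ := ![1, Complex.I]

/-- Partial derivative of `Q` in the `i`-th coordinate of the `ζ` variable. -/
def dζ (p δ : ℝ) (i : Fin 2) (ζ η : ℂ) : ℝ :=
  deriv (fun t : ℝ => Q p δ (ζ + (t : ℂ) * dir i) η) 0

/-- Partial derivative of `Q` in the `i`-th coordinate of the `η` variable. -/
def dη (p δ : ℝ) (i : Fin 2) (ζ η : ℂ) : ℝ :=
  deriv (fun t : ℝ => Q p δ ζ (η + (t : ℂ) * dir i)) 0

/-- The `ζζ` block of the Hessian of `Q`: `(H₁)ᵢⱼ = ∂²_{ζᵢζⱼ} Q`. -/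
def H1 (p δ : ℝ) (ζ η : ℂ) : Matrix (Fin 2) (Fin 2) ℝ :=
  Matrix.of fun i j => deriv (fun s : ℝ => dζ p δ j (ζ + (s : ℂ) * dir i) η) 0

/-- The mixed `ζη` block of the Hessian of `Q`: `(H₂)ᵢⱼ = ∂²_{ζᵢηⱼ} Q`. -/
def H2 (p δ : ℝ) (ζ η : ℂ) : Matrix (Fin 2) (Fin 2) ℝ :=
  Matrix.of fun i j => deriv (fun s : ℝ => dη p δ j (ζ + (s : ℂ) * dir i) η) 0

/-- The `ηη` block of the Hessian of `Q`: `(H₃)ᵢⱼ = ∂²_{ηᵢηⱼ} Q`. -/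
def H3 (p δ : ℝ) (ζ η : ℂ) : Matrix (Fin 2) (Fin 2) ℝ :=
  Matrix.of fun i j => deriv (fun s : ℝ => dη p δ j ζ (η + (s : ℂ) * dir i)) 0

def I1 (p δ : ℝ) (ζ η : ℂ) : Matrix (Fin 2) (Fin 2) ℝ :=
  !![H1 p δ ζ η 0 1, (H1 p δ ζ η 1 1 - H1 p δ ζ η 0 0) / 2;
     (H1 p δ ζ η 1 1 - H1 p δ ζ η 0 0) / 2, -(H1 p δ ζ η 0 1)]

def I2 (p δ : ℝ) (ζ η : ℂ) : Matrix (Fin 2) (Fin 2) ℝ :=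
  (1 / 2 : ℝ) •
    !![H2 p δ ζ η 1 0 - H2 p δ ζ η 0 1, H2 p δ ζ η 0 0 + H2 p δ ζ η 1 1;
       -(H2 p δ ζ η 0 0) - H2 p δ ζ η 1 1, H2 p δ ζ η 1 0 - H2 p δ ζ η 0 1]

def I3 (p δ : ℝ) (ζ η : ℂ) : Matrix (Fin 2) (Fin 2) ℝ :=
  !![H3 p δ ζ η 0 1, (H3 p δ ζ η 1 1 - H3 p δ ζ η 0 0) / 2;
     (H3 p δ ζ η 1 1 - H3 p δ ζ η 0 0) / 2, -(H3 p δ ζ η 0 1)]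

/-!
On the open region `‖η‖ ^ q < ‖ζ‖ ^ p` the function `Q` is the separated sum
`(1 + 2δ/p) ‖ζ‖ ^ p + (1 + δ (2/q - 1)) ‖η‖ ^ q`, so the mixed second derivatives vanish and the
diagonal blocks are multiples of the Hessian `r ‖z‖ ^ (r - 2) ((r/2) I + ((r - 2)/2) K(2 arg z))`
of `‖z‖ ^ r`. Since `opI` kills the identity and turns `K(α)` into `K(α - π/2)`, and
`K(α) + tan φ K(α - π/2) = K(α - φ) / cos φ`, the twisted blocks are multiples of `D_{r,±φ}`.
-/

open Filter Topology
open scoped RealInnerProductSpace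

theorem rpow_eq_sq_rpow_half {a : ℝ} (ha : 0 ≤ a) (r : ℝ) : a ^ r = (a ^ 2) ^ (r / 2) := by
  rw [← Real.rpow_natCast, ← Real.rpow_mul ha]
  norm_num [mul_div_cancel₀]

section InnerProductSpace

variable {E : Type*} [NormedAddCommGroup E] [InnerProductSpace ℝ E]

theorem hasDerivAt_norm_add_smul_rpow {x : E} (hx : x ≠ 0) (v : E) (r : ℝ) :
    HasDerivAt (fun t : ℝ => ‖x + t • v‖ ^ r) (r * ‖x‖ ^ (r - 2) * ⟪x, v⟫) 0 := by
  have hline : HasDerivAt (fun t : ℝ => x + t • v) v 0 := by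
    simpa using ((hasDerivAt_id (0 : ℝ)).smul_const v).const_add x
  have h := hline.norm_sq.rpow_const (p := r / 2) (Or.inl (by simpa using hx))
  simp only [← rpow_eq_sq_rpow_half (norm_nonneg _), zero_smul, add_zero] at h
  convert h using 1
  rw [rpow_eq_sq_rpow_half (norm_nonneg x) (r - 2)]
  ring_nf

theorem hasDerivAt_norm_add_smul_rpow_mul_inner {x : E} (hx : x ≠ 0) (w v : E) (r : ℝ) :
    HasDerivAt (fun s : ℝ => ‖x + s • w‖ ^ (r - 2) * ⟪x + s • w, v⟫)
      ((r - 2) * ‖x‖ ^ (r - 4) * ⟪x, w⟫ * ⟪x, v⟫ + ‖x‖ ^ (r - 2) * ⟪w, v⟫) 0 := by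
  have hline : HasDerivAt (fun s : ℝ => x + s • w) w 0 := by
    simpa using ((hasDerivAt_id (0 : ℝ)).smul_const w).const_add x
  have hinner : HasDerivAt (fun s : ℝ => ⟪x + s • w, v⟫) ⟪w, v⟫ 0 := by
    simpa using hline.inner ℝ (hasDerivAt_const 0 v)
  have h := (hasDerivAt_norm_add_smul_rpow hx w (r - 2)).mul hinner
  rw [zero_smul, add_zero, sub_sub, show (2 : ℝ) + 2 = 4 by norm_num] at h
  exact h

end InnerProductSpace

def normRpowHessian (r : ℝ) (z : ℂ) : Matrix (Fin 2) (Fin 2) ℝ :=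
  Matrix.of fun i j => r * ((r - 2) * ‖z‖ ^ (r - 4) * ⟪z, dir i⟫ * ⟪z, dir j⟫
    + ‖z‖ ^ (r - 2) * ⟪dir i, dir j⟫)

/-- `I1 = opI H1` and `I3 = opI H3`; on symmetric `A`, `opI A = (A J - J A) / 2` for the rotation
`J` by `π / 2`. -/
def opI : Matrix (Fin 2) (Fin 2) ℝ →ₗ[ℝ] Matrix (Fin 2) (Fin 2) ℝ where
  toFun A := !![A 0 1, (A 1 1 - A 0 0) / 2; (A 1 1 - A 0 0) / 2, -A 0 1]
  map_add' A B := by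
    ext i j
    fin_cases i <;> fin_cases j <;>
      simp only [Matrix.add_apply, Fin.isValue, Fin.zero_eta, Fin.mk_one, Matrix.of_apply,
        Matrix.cons_val', Matrix.cons_val_zero, Matrix.cons_val_one, Matrix.cons_val_fin_one] <;>
      ring
  map_smul' c A := by
    ext i j
    fin_cases i <;> fin_cases j <;>
      simp only [Matrix.smul_apply, smul_eq_mul, RingHom.id_apply, Fin.isValue, Fin.zero_eta,
        Fin.mk_one, Matrix.of_apply, Matrix.cons_val', Matrix.cons_val_zero, Matrix.cons_val_one,
        Matrix.cons_val_fin_one] <;>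
      ring

theorem opI_one : opI 1 = 0 := by
  ext i j; fin_cases i <;> fin_cases j <;> simp [opI]

theorem opI_Kmat (α : ℝ) : opI (Kmat α) = Kmat (α - π / 2) := by
  ext i j
  fin_cases i <;> fin_cases j <;>
    simp only [opI, Kmat, Fin.isValue, Fin.zero_eta, Fin.mk_one, LinearMap.coe_mk, AddHom.coe_mk,
      Matrix.of_apply, Matrix.cons_val', Matrix.cons_val_zero, Matrix.cons_val_one,
      Matrix.cons_val_fin_one, Real.cos_sub_pi_div_two, Real.sin_sub_pi_div_two] <;>
    ring

theorem Kmat_add_tan_smul {φ : ℝ} (hφ : Real.cos φ ≠ 0) (α : ℝ) :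
    Kmat α + Real.tan φ • Kmat (α - π / 2) = (Real.cos φ)⁻¹ • Kmat (α - φ) := by
  rw [Real.tan_eq_sin_div_cos, Kmat, Kmat, Real.cos_sub_pi_div_two, Real.sin_sub_pi_div_two]
  ext i j
  fin_cases i <;> fin_cases j <;>
    simp only [Kmat, Real.cos_sub, Real.sin_sub, Matrix.add_apply, Matrix.smul_apply, smul_eq_mul,
      Fin.isValue, Fin.zero_eta, Fin.mk_one, Matrix.of_apply, Matrix.cons_val',
      Matrix.cons_val_zero, Matrix.cons_val_one, Matrix.cons_val_fin_one] <;>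
    field_simp <;>
    ring

theorem normRpowHessian_eq {z : ℂ} (hz : z ≠ 0) (r : ℝ) :
    normRpowHessian r z =
      (r * ‖z‖ ^ (r - 2)) • ((r / 2) • 1 + ((r - 2) / 2) • Kmat (2 * Complex.arg z)) := by
  have hnorm : 0 < ‖z‖ := norm_pos_iff.mpr hz
  have hcos : Real.cos z.arg = z.re / ‖z‖ := Complex.cos_arg hz
  have hsin : Real.sin z.arg = z.im / ‖z‖ := Complex.sin_arg z
  have hsq : ‖z‖ ^ 2 = z.re ^ 2 + z.im ^ 2 := by
    rw [Complex.sq_norm, Complex.normSq_apply]; ring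
  have hpow : ‖z‖ ^ (r - 4) = ‖z‖ ^ (r - 2) / ‖z‖ ^ 2 := by
    rw [show r - 4 = r - 2 - 2 by ring, Real.rpow_sub hnorm, Real.rpow_two]
  ext i j
  fin_cases i <;> fin_cases j <;>
    simp only [normRpowHessian, Kmat, dir, Complex.inner, Real.cos_two_mul, Real.sin_two_mul,
      hcos, hsin, hpow, Matrix.add_apply, Matrix.smul_apply, smul_eq_mul, Fin.isValue,
      Fin.zero_eta, Fin.mk_one, Matrix.of_apply, Matrix.cons_val', Matrix.cons_val_zero,
      Matrix.cons_val_one, Matrix.cons_val_fin_one, Matrix.one_apply_eq, Matrix.one_apply_ne,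
      ne_eq, one_ne_zero, zero_ne_one, not_false_eq_true, Complex.mul_re, Complex.conj_re,
      Complex.conj_im, Complex.one_re, Complex.one_im, Complex.I_re, Complex.I_im] <;>
    field_simp <;>
    rw [hsq] <;>
    ring

theorem normRpowHessian_add_tan_smul_opI {r φ : ℝ} (hr : r ≠ 0) (hφ : Real.cos φ ≠ 0) {z : ℂ}
    (hz : z ≠ 0) :
    normRpowHessian r z + Real.tan φ • opI (normRpowHessian r z) =
      (r * ‖z‖ ^ (r - 2)) • DmatC r φ z := by
  calc normRpowHessian r z + Real.tan φ • opI (normRpowHessian r z)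
      = (r * ‖z‖ ^ (r - 2)) • ((r / 2) • 1 + ((r - 2) / 2) •
          (Kmat (2 * z.arg) + Real.tan φ • Kmat (2 * z.arg - π / 2))) := by
        rw [normRpowHessian_eq hz, map_smul, map_add, map_smul, map_smul, opI_one, opI_Kmat]
        module
    _ = (r * ‖z‖ ^ (r - 2)) • DmatC r φ z := by
        rw [Kmat_add_tan_smul hφ, DmatC, smul_add (r / 2), smul_smul, smul_smul]
        congr 3
        field_simp

theorem qexp_pos {p : ℝ} (hp : 1 < p) : 0 < qexp p :=
  div_pos (by linarith) (by linarith)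

theorem ne_zero_of_rpow_lt_norm_rpow {a p : ℝ} (hp : p ≠ 0) {z : ℂ} (ha : 0 ≤ a)
    (h : a < ‖z‖ ^ p) : z ≠ 0 := by
  rintro rfl
  rw [norm_zero, Real.zero_rpow hp] at h
  exact h.not_ge ha

theorem Q_of_good {p δ : ℝ} {ζ η : ℂ} (h : ‖η‖ ^ qexp p < ‖ζ‖ ^ p) :
    Q p δ ζ η = (1 + 2 * δ / p) * ‖ζ‖ ^ p + (1 + δ * (2 / qexp p - 1)) * ‖η‖ ^ qexp p := by
  rw [Q, if_neg h.not_ge]; ring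

theorem isOpen_good {p : ℝ} (hp : 1 < p) : IsOpen {w : ℂ × ℂ | ‖w.2‖ ^ qexp p < ‖w.1‖ ^ p} :=
  isOpen_lt (continuous_snd.norm.rpow_const fun _ => Or.inr (qexp_pos hp).le)
    (continuous_fst.norm.rpow_const fun _ => Or.inr (by linarith))

theorem eventually_line_fst {P : ℂ × ℂ → Prop} {ζ η : ℂ} (h : ∀ᶠ w in 𝓝 (ζ, η), P w) (v : ℂ) :
    ∀ᶠ s : ℝ in 𝓝 0, P (ζ + s * v, η) := by
  have hline : Tendsto (fun s : ℝ => (ζ + s * v, η)) (𝓝 0) (𝓝 (ζ, η)) := by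
    simpa using (by fun_prop : Continuous fun s : ℝ => (ζ + s * v, η)).tendsto 0
  exact hline.eventually h

theorem eventually_line_snd {P : ℂ × ℂ → Prop} {ζ η : ℂ} (h : ∀ᶠ w in 𝓝 (ζ, η), P w) (v : ℂ) :
    ∀ᶠ s : ℝ in 𝓝 0, P (ζ, η + s * v) := by
  have hline : Tendsto (fun s : ℝ => (ζ, η + s * v)) (𝓝 0) (𝓝 (ζ, η)) := by
    simpa using (by fun_prop : Continuous fun s : ℝ => (ζ, η + s * v)).tendsto 0
  exact hline.eventually h

section GoodRegion

variable {p δ : ℝ} {ζ η : ℂ}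

theorem dζ_of_good (hp : 1 < p) (h : ‖η‖ ^ qexp p < ‖ζ‖ ^ p) (j : Fin 2) :
    dζ p δ j ζ η = (1 + 2 * δ / p) * (p * (‖ζ‖ ^ (p - 2) * ⟪ζ, dir j⟫)) := by
  have hζ := ne_zero_of_rpow_lt_norm_rpow (by linarith) (by positivity) h
  have hQ : (fun t : ℝ => Q p δ (ζ + t * dir j) η) =ᶠ[𝓝 0] fun t =>
      (1 + 2 * δ / p) * ‖ζ + t • dir j‖ ^ p + (1 + δ * (2 / qexp p - 1)) * ‖η‖ ^ qexp p :=
    (eventually_line_fst ((isOpen_good hp).mem_nhds h) (dir j)).mono fun t ht => by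
      dsimp only at ht ⊢
      rw [Q_of_good ht, Complex.real_smul]
  rw [dζ, hQ.deriv_eq, (((hasDerivAt_norm_add_smul_rpow hζ _ p).const_mul _).add_const _).deriv]
  ring

theorem dη_of_good (hp : 1 < p) (h : ‖η‖ ^ qexp p < ‖ζ‖ ^ p) (hη : η ≠ 0) (j : Fin 2) :
    dη p δ j ζ η =
      (1 + δ * (2 / qexp p - 1)) * (qexp p * (‖η‖ ^ (qexp p - 2) * ⟪η, dir j⟫)) := by
  have hQ : (fun t : ℝ => Q p δ ζ (η + t * dir j)) =ᶠ[𝓝 0] fun t =>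
      (1 + 2 * δ / p) * ‖ζ‖ ^ p + (1 + δ * (2 / qexp p - 1)) * ‖η + t • dir j‖ ^ qexp p :=
    (eventually_line_snd ((isOpen_good hp).mem_nhds h) (dir j)).mono fun t ht => by
      dsimp only at ht ⊢
      rw [Q_of_good ht, Complex.real_smul]
  rw [dη, hQ.deriv_eq, (((hasDerivAt_norm_add_smul_rpow hη _ _).const_mul _).const_add _).deriv]
  ring

theorem H1_of_good (hp : 1 < p) (h : ‖η‖ ^ qexp p < ‖ζ‖ ^ p) :
    H1 p δ ζ η = (1 + 2 * δ / p) • normRpowHessian p ζ := by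
  have hζ := ne_zero_of_rpow_lt_norm_rpow (by linarith) (by positivity) h
  ext i j
  have hd : (fun s : ℝ => dζ p δ j (ζ + s * dir i) η) =ᶠ[𝓝 0] fun s =>
      (1 + 2 * δ / p) * (p * (‖ζ + s • dir i‖ ^ (p - 2) * ⟪ζ + s • dir i, dir j⟫)) :=
    (eventually_line_fst ((isOpen_good hp).mem_nhds h) (dir i)).mono fun s hs => by
      dsimp only at hs ⊢
      rw [dζ_of_good hp hs, Complex.real_smul]
  rw [H1, Matrix.of_apply, hd.deriv_eq,
    (((hasDerivAt_norm_add_smul_rpow_mul_inner hζ _ _ p).const_mul _).const_mul _).deriv]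
  simp [normRpowHessian]

theorem H2_of_good (hp : 1 < p) (h : ‖η‖ ^ qexp p < ‖ζ‖ ^ p) (hη : η ≠ 0) :
    H2 p δ ζ η = 0 := by
  ext i j
  have hd : (fun s : ℝ => dη p δ j (ζ + s * dir i) η) =ᶠ[𝓝 0] fun _ =>
      (1 + δ * (2 / qexp p - 1)) * (qexp p * (‖η‖ ^ (qexp p - 2) * ⟪η, dir j⟫)) :=
    (eventually_line_fst ((isOpen_good hp).mem_nhds h) (dir i)).mono fun s hs =>
      dη_of_good hp hs hη j
  rw [H2, Matrix.of_apply, hd.deriv_eq, deriv_const, Matrix.zero_apply]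

theorem H3_of_good (hp : 1 < p) (h : ‖η‖ ^ qexp p < ‖ζ‖ ^ p) (hη : η ≠ 0) :
    H3 p δ ζ η = (1 + δ * (2 / qexp p - 1)) • normRpowHessian (qexp p) η := by
  have hopen : IsOpen {w : ℂ × ℂ | ‖w.2‖ ^ qexp p < ‖w.1‖ ^ p ∧ w.2 ≠ 0} :=
    (isOpen_good hp).inter (isOpen_ne_fun continuous_snd continuous_const)
  ext i j
  have hd : (fun s : ℝ => dη p δ j ζ (η + s * dir i)) =ᶠ[𝓝 0] fun s =>
      (1 + δ * (2 / qexp p - 1)) *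
        (qexp p * (‖η + s • dir i‖ ^ (qexp p - 2) * ⟪η + s • dir i, dir j⟫)) :=
    (eventually_line_snd (hopen.mem_nhds ⟨h, hη⟩) (dir i)).mono fun s hs => by
      dsimp only at hs ⊢
      rw [dη_of_good hp hs.1 hs.2, Complex.real_smul]
  rw [H3, Matrix.of_apply, hd.deriv_eq,
    (((hasDerivAt_norm_add_smul_rpow_mul_inner hη _ _ _).const_mul _).const_mul _).deriv]
  simp [normRpowHessian]

end GoodRegion

theorem stmt17_general (p δ φ : ℝ) (hp : 2 < p)
    (hφ : φ ∈ Set.Ioo (-(π / 2)) (π / 2)) (ζ η : ℂ)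
    (hg : ‖η‖ ^ qexp p < ‖ζ‖ ^ p) (hη : (0 : ℝ) < ‖η‖ ^ qexp p) :
    H2 p δ ζ η = 0 ∧
    H1 p δ ζ η + Real.tan φ • I1 p δ ζ η =
      ((p + 2 * δ) * ‖ζ‖ ^ (p - 2)) • DmatC p φ ζ ∧
    H3 p δ ζ η - Real.tan φ • I3 p δ ζ η =
      ((qexp p + (2 - qexp p) * δ) * ‖η‖ ^ (qexp p - 2)) • DmatC (qexp p) (-φ) η := by
  have hp1 : 1 < p := by linarith
  have hq := qexp_pos hp1
  have hζ0 : ζ ≠ 0 := ne_zero_of_rpow_lt_norm_rpow (by linarith) hη.le hg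
  have hη0 : η ≠ 0 := ne_zero_of_rpow_lt_norm_rpow hq.ne' le_rfl hη
  have hcos : Real.cos φ ≠ 0 := (Real.cos_pos_of_mem_Ioo hφ).ne'
  refine ⟨H2_of_good hp1 hg hη0, ?_, ?_⟩
  · calc H1 p δ ζ η + Real.tan φ • I1 p δ ζ η
        = (1 + 2 * δ / p) • (normRpowHessian p ζ + Real.tan φ • opI (normRpowHessian p ζ)) := by
          rw [show I1 p δ ζ η = opI (H1 p δ ζ η) from rfl, H1_of_good hp1 hg, map_smul,
            smul_add, smul_comm]
      _ = ((p + 2 * δ) * ‖ζ‖ ^ (p - 2)) • DmatC p φ ζ := by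
          rw [normRpowHessian_add_tan_smul_opI (by linarith) hcos hζ0, smul_smul]
          congr 1
          field_simp
  · calc H3 p δ ζ η - Real.tan φ • I3 p δ ζ η
        = (1 + δ * (2 / qexp p - 1)) • (normRpowHessian (qexp p) η +
            Real.tan (-φ) • opI (normRpowHessian (qexp p) η)) := by
          rw [show I3 p δ ζ η = opI (H3 p δ ζ η) from rfl, H3_of_good hp1 hg hη0, map_smul,
            Real.tan_neg, neg_smul, ← sub_eq_add_neg, smul_sub, smul_comm]
      _ = ((qexp p + (2 - qexp p) * δ) * ‖η‖ ^ (qexp p - 2)) • DmatC (qexp p) (-φ) η := by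
          rw [normRpowHessian_add_tan_smul_opI hq.ne' (by rwa [Real.cos_neg]) hη0, smul_smul]
          congr 1
          field_simp

theorem stmt17 (p δ φ : ℝ) (hp : 2 < p) (hδ : 0 < δ)
    (hφ : φ ∈ Set.Ioo (-(π / 2)) (π / 2)) (ζ η : ℂ)
    (hg : ‖η‖ ^ qexp p < ‖ζ‖ ^ p) (hη : (0 : ℝ) < ‖η‖ ^ qexp p) :
    H2 p δ ζ η = 0 ∧
    H1 p δ ζ η + Real.tan φ • I1 p δ ζ η =
      ((p + 2 * δ) * ‖ζ‖ ^ (p - 2)) • DmatC p φ ζ ∧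
    H3 p δ ζ η - Real.tan φ • I3 p δ ζ η =
      ((qexp p + (2 - qexp p) * δ) * ‖η‖ ^ (qexp p - 2)) • DmatC (qexp p) (-φ) η :=
  stmt17_general p δ φ hp hφ ζ η hg hη

end
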